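/- Let ν_S > 0, c̄ ≥ 0 and T > 0. Suppose S : [0,T] × D_ε → ℝ is continuous with S(t,x) ≥ 0 and satisfies S(t,x) = S(0,x) − ∫₀ᵗ S(s,x)Γ(s,x)ds + ν_S ∫₀ᵗ Δ_ε S(s,·)(x)ds for all (t,x), where Γ : [0,T] × D_ε → ℝ is measurable with 0 ≤ Γ(s,x) ≤ c̄. Then S(t,x) ≥ e^{−c̄ t} · min_{y ∈ D_ε} S(0,y) for all t ∈ [0,T] and x ∈ D_ε. -/

import Mathlib

/-!
Let `m(t) = min_x S(t,x)`. If `m ≤ f` then `Δ_ε f(x) ≥ 2dε⁻²(m - f(x))`, so the loss rate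
`SΓ - ν_S Δ_ε S` at `x` is at most `c̄ m + (c̄ + 2dε⁻²ν_S)(S - m)`. Writing `S(t,x) - S(z,x)`
as the integral of the loss rate over `[t,z]` at a point `x` minimising `S(z,·)`, which by
continuity is nearly minimal on all of `[t,z]`, shows that the lower right Dini derivative of
`m` is at least `-c̄ m`. A comparison argument for Dini derivatives then gives
`m(t) ≥ e^{-c̄t} m(0)`.
-/

open MeasureTheory Set

abbrev Grid (d n : ℕ) := Fin d → ZMod n

/-- Discrete Laplacian on the grid of mesh `ε = 1/n` (the factor `(n:ℝ)^2` is `ε⁻²`). -/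
noncomputable def discLap (d n : ℕ) (f : Grid d n → ℝ) (x : Grid d n) : ℝ :=
  (n : ℝ) ^ 2 * ∑ i : Fin d,
    (f (Function.update x i (x i + 1)) - 2 * f x + f (Function.update x i (x i - 1)))

/-- Matrix of the discrete Laplacian (a symmetric matrix indexed by the grid). -/
noncomputable def lapMat (d n : ℕ) [NeZero n] : Matrix (Grid d n) (Grid d n) ℝ :=
  Matrix.of fun x y => discLap d n (fun z => if z = y then 1 else 0) x

open Filter Topology Real

theorem MeasureTheory.IntegrableOn.intervalIntegrable_of_mem_Icc {F : ℝ → ℝ} {a b s t : ℝ}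
    (hF : IntegrableOn F (Icc a b)) (hs : s ∈ Icc a b) (ht : t ∈ Icc a b) :
    IntervalIntegrable F volume s t :=
  (hF.mono_set (uIcc_subset_Icc hs ht)).intervalIntegrable

theorem sub_eq_integral_of_eq_sub_integral {f F : ℝ → ℝ} {a b t z : ℝ}
    (hF : IntegrableOn F (Icc a b)) (hf : ∀ t ∈ Icc a b, f t = f a - ∫ s in a..t, F s)
    (ht : t ∈ Icc a b) (hz : z ∈ Icc a b) :
    f t - f z = ∫ s in t..z, F s := by
  have ha : a ∈ Icc a b := ⟨le_rfl, ht.1.trans ht.2⟩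
  rw [hf t ht, hf z hz, ← intervalIntegral.integral_interval_sub_left
    (hF.intervalIntegrable_of_mem_Icc ha hz) (hF.intervalIntegrable_of_mem_Icc ha ht)]
  ring

theorem continuousOn_ciInf {X ι : Type*} [TopologicalSpace X] [Fintype ι] [Nonempty ι]
    {u : X → ι → ℝ} {s : Set X} (hu : ∀ x, ContinuousOn (fun t => u t x) s) :
    ContinuousOn (fun t => ⨅ x, u t x) s := by
  simpa only [← Finset.inf'_univ_eq_ciInf] using
    ContinuousOn.finset_inf'_apply Finset.univ_nonempty fun x _ => hu x

theorem exp_neg_mul_mul_le_of_slope_neg_lt {m : ℝ → ℝ} {c a b : ℝ} (hc : 0 ≤ c)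
    (hm : ContinuousOn m (Icc a b))
    (hslope : ∀ t ∈ Ico a b, ∀ r, c * m t < r → ∃ᶠ z in 𝓝[>] t, slope (-m) t z < r) :
    ∀ t ∈ Icc a b, exp (-c * (t - a)) * m a ≤ m t := by
  -- the `ε e^t` term makes the derivative comparison at touching points strict
  have hcompare : ∀ ε > 0, ∀ t ∈ Icc a b,
      -m t ≤ -(m a * exp (-c * (t - a))) + ε * exp t := by
    intro ε hε
    have ha : -m a ≤ -(m a * exp (-c * (a - a))) + ε * exp a := by
      rw [sub_self, mul_zero, exp_zero, mul_one]
      linarith [mul_pos hε (exp_pos a)]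
    refine image_le_of_liminf_slope_right_lt_deriv_boundary hm.neg hslope
      (B' := fun t => c * m a * exp (-c * (t - a)) + ε * exp t) ha
      (fun t => ?_) (fun t _ hmt => ?_)
    · exact ((((((hasDerivAt_id' t).sub_const a).const_mul (-c)).exp.const_mul (m a)).neg.add
        ((hasDerivAt_exp t).const_mul ε))).congr_deriv (by ring)
    · have hmt : m t = m a * exp (-c * (t - a)) - ε * exp t := by
        rw [Pi.neg_apply] at hmt; linarith
      rw [hmt]
      nlinarith [mul_nonneg hc (mul_pos hε (exp_pos t)).le, mul_pos hε (exp_pos t)]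
  intro t ht
  refine le_of_forall_pos_le_add fun ε hε => ?_
  have := hcompare (ε / exp t) (by positivity) t ht
  rw [div_mul_cancel₀ _ (exp_pos t).ne'] at this
  linarith

section RunningMinimum

variable {ι : Type*} [Fintype ι] {u F : ℝ → ι → ℝ} {a b c K : ℝ}

theorem eventually_forall_Icc_abs_sub_lt (hu : ∀ x, ContinuousOn (fun t => u t x) (Icc a b))
    {t η : ℝ} (ht : t ∈ Ico a b) (hη : 0 < η) :
    ∀ᶠ z in 𝓝[>] t, ∀ s ∈ Icc t z, s ∈ Icc a b ∧ ∀ x, |u s x - u t x| < η := by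
  have hIcc : Icc a b ∈ 𝓝[≥] t :=
    mem_of_superset (Icc_mem_nhdsGE ht.2) (Icc_subset_Icc_left ht.1)
  have hclose : ∀ᶠ s in 𝓝[Icc a b] t, ∀ x, |u s x - u t x| < η :=
    eventually_all.2 fun x => (hu x t (Ico_subset_Icc_self ht)).eventually
      (eventually_abs_sub_lt _ hη)
  obtain ⟨b', hb', hsub⟩ := mem_nhdsGE_iff_exists_Ico_subset.1
    (inter_mem hIcc (nhdsWithin_le_of_mem hIcc hclose))
  filter_upwards [Ioo_mem_nhdsGT hb'] with z hz s hs
  exact hsub ⟨hs.1, hs.2.trans_lt hz.2⟩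

variable [Nonempty ι]

theorem frequently_slope_neg_ciInf_lt (hc : 0 ≤ c) (hK : 0 ≤ K)
    (hu : ∀ x, ContinuousOn (fun t => u t x) (Icc a b))
    (hF : ∀ x, IntegrableOn (fun s => F s x) (Icc a b))
    (hrep : ∀ x, ∀ t ∈ Icc a b, u t x = u a x - ∫ s in a..t, F s x)
    (hFle : ∀ s ∈ Icc a b, ∀ x, F s x ≤ c * (⨅ y, u s y) + K * (u s x - ⨅ y, u s y)) :
    ∀ t ∈ Ico a b, ∀ r, c * (⨅ y, u t y) < r →
      ∃ᶠ z in 𝓝[>] t, slope (-fun t => ⨅ y, u t y) t z < r := by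
  intro t ht r hr
  set m : ℝ → ℝ := fun t => ⨅ y, u t y
  have hmin : ∀ s y, m s ≤ u s y := fun s y => ciInf_le (Finite.bddBelow_range _) y
  set η := (r - c * m t) / (c + 4 * K + 1)
  have hη : 0 < η := div_pos (by linarith) (by positivity)
  refine Eventually.frequently ?_
  filter_upwards [eventually_forall_Icc_abs_sub_lt hu ht hη, self_mem_nhdsWithin]
    with z hnear (htz : t < z)
  obtain ⟨xz, hxz⟩ := exists_eq_ciInf_of_finite (f := u z)
  obtain ⟨xt, hxt⟩ := exists_eq_ciInf_of_finite (f := u t)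
  have hzab := (hnear z ⟨htz.le, le_rfl⟩).1
  -- `xz` minimises `u z ·`, hence is nearly minimal on all of `[t, z]`: the `K`-term is `O(η)`
  have hbound : ∀ s ∈ Icc t z, F s xz ≤ c * m t + (c + 4 * K) * η := by
    intro s hs
    obtain ⟨hsab, hs_near⟩ := hnear s hs
    have hz_near := (hnear z ⟨htz.le, le_rfl⟩).2
    have hms_le : m s ≤ m t + η := by
      linarith [hmin s xt, (abs_lt.1 (hs_near xt)).2, hxt]
    have hms_ge : m t - η ≤ m s :=
      le_ciInf fun y => by linarith [hmin t y, (abs_lt.1 (hs_near y)).1]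
    have hxz_le : u s xz ≤ m t + 3 * η := by
      linarith [hmin z xt, (abs_lt.1 (hz_near xt)).2, (abs_lt.1 (hz_near xz)).1,
        (abs_lt.1 (hs_near xz)).2, hxz, hxt]
    calc F s xz ≤ c * m s + K * (u s xz - m s) := hFle s hsab xz
      _ ≤ c * (m t + η) + K * (4 * η) := by gcongr; linarith
      _ = c * m t + (c + 4 * K) * η := by ring
  have hdecay : m t - m z ≤ (z - t) * (c * m t + (c + 4 * K) * η) :=
    calc m t - m z ≤ u t xz - u z xz := by linarith [hmin t xz, hxz]
      _ = ∫ s in t..z, F s xz := sub_eq_integral_of_eq_sub_integral (hF xz)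
          (hrep xz) (Ico_subset_Icc_self ht) hzab
      _ ≤ ∫ _ in t..z, (c * m t + (c + 4 * K) * η) :=
          intervalIntegral.integral_mono_on htz.le
            ((hF xz).intervalIntegrable_of_mem_Icc (Ico_subset_Icc_self ht) hzab)
            intervalIntegrable_const hbound
      _ = (z - t) * (c * m t + (c + 4 * K) * η) := by
          rw [intervalIntegral.integral_const, smul_eq_mul]
  have hη_eq : (c + 4 * K + 1) * η = r - c * m t := mul_div_cancel₀ _ (by positivity)
  rw [slope_def_field, div_lt_iff₀ (sub_pos.2 htz), Pi.neg_apply, Pi.neg_apply]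
  nlinarith [mul_pos (sub_pos.2 htz) hη]

end RunningMinimum

section DiscreteLaplacian

variable {d n : ℕ}

theorem continuousOn_discLap {X : Type*} [TopologicalSpace X] {S : X → Grid d n → ℝ}
    {s : Set X} (hS : ∀ x, ContinuousOn (fun t => S t x) s) (x : Grid d n) :
    ContinuousOn (fun t => discLap d n (S t) x) s := by
  unfold discLap
  fun_prop

theorem mul_sub_le_discLap {f : Grid d n → ℝ} {m : ℝ} (hm : ∀ y, m ≤ f y) (x : Grid d n) :
    2 * d * n ^ 2 * (m - f x) ≤ discLap d n f x :=
  calc 2 * d * n ^ 2 * (m - f x) = (n : ℝ) ^ 2 * ∑ _i : Fin d, (2 * m - 2 * f x) := by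
        simp only [Finset.sum_sub_distrib, Finset.sum_const, Finset.card_univ, Fintype.card_fin,
          nsmul_eq_mul]
        ring
    _ ≤ discLap d n f x := by
        unfold discLap
        gcongr with i
        linarith [hm (Function.update x i (x i + 1)), hm (Function.update x i (x i - 1))]

theorem mul_sub_mul_discLap_le {f : Grid d n → ℝ} {m γ ν c : ℝ} (hm : ∀ y, m ≤ f y)
    {x : Grid d n} (hfx : 0 ≤ f x) (hγ : γ ≤ c) (hν : 0 ≤ ν) :
    f x * γ - ν * discLap d n f x ≤ c * m + (c + 2 * d * n ^ 2 * ν) * (f x - m) := by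
  have hlap := mul_le_mul_of_nonneg_left (mul_sub_le_discLap hm x) hν
  have hloss : f x * γ ≤ f x * c := mul_le_mul_of_nonneg_left hγ hfx
  linarith

end DiscreteLaplacian

theorem susceptible_exponential_lower_bound_general
    (d : ℕ) (n : ℕ) [NeZero n] (νS cbar T : ℝ)
    (hνS : 0 < νS) (hcbar : 0 ≤ cbar)
    (S : ℝ → Grid d n → ℝ) (Γ : ℝ → Grid d n → ℝ)
    (hScont : ∀ x, ContinuousOn (fun t => S t x) (Icc 0 T))
    (hSpos : ∀ t ∈ Icc (0:ℝ) T, ∀ x, 0 ≤ S t x)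
    (hΓmeas : ∀ x, Measurable fun s => Γ s x)
    (hΓ : ∀ s ∈ Icc (0:ℝ) T, ∀ x, Γ s x ∈ Icc 0 cbar)
    (heq : ∀ t ∈ Icc (0:ℝ) T, ∀ x,
      S t x = S 0 x - (∫ s in (0:ℝ)..t, S s x * Γ s x)
        + νS * ∫ s in (0:ℝ)..t, discLap d n (S s) x) :
    ∀ t ∈ Icc (0:ℝ) T, ∀ x,
      Real.exp (-cbar * t) * (⨅ y, S 0 y) ≤ S t x := by
  have hloss : ∀ x, IntegrableOn (fun s => S s x * Γ s x) (Icc 0 T) := fun x =>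
    (hScont x).integrableOn_Icc.mul_bdd (hΓmeas x).aestronglyMeasurable
      (ae_restrict_of_forall_mem measurableSet_Icc fun s hs => by
        simpa [abs_of_nonneg (hΓ s hs x).1] using (hΓ s hs x).2)
  have hdiff : ∀ x, IntegrableOn (fun s => discLap d n (S s) x) (Icc 0 T) := fun x =>
    (continuousOn_discLap hScont x).integrableOn_Icc
  have hrep : ∀ x, ∀ t ∈ Icc 0 T,
      S t x = S 0 x - ∫ s in 0..t, (S s x * Γ s x - νS * discLap d n (S s) x) := by
    intro x t ht
    have h0 : (0 : ℝ) ∈ Icc 0 T := ⟨le_rfl, ht.1.trans ht.2⟩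
    rw [intervalIntegral.integral_sub ((hloss x).intervalIntegrable_of_mem_Icc h0 ht)
      (((hdiff x).intervalIntegrable_of_mem_Icc h0 ht).const_mul νS),
      intervalIntegral.integral_const_mul, heq t ht x]
    ring
  have hmin := exp_neg_mul_mul_le_of_slope_neg_lt hcbar (continuousOn_ciInf hScont)
    (frequently_slope_neg_ciInf_lt hcbar (by positivity) hScont
      (fun x => (hloss x).sub ((hdiff x).const_mul νS)) hrep fun s hs x =>
        mul_sub_mul_discLap_le (fun y => ciInf_le (Finite.bddBelow_range _) y)
          (hSpos s hs x) (hΓ s hs x).2 hνS.le)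
  intro t ht x
  simpa using (hmin t ht).trans (ciInf_le (Finite.bddBelow_range _) x)

/-- exponential lower bound for a nonnegative solution of the
susceptible equation with a bounded infection rate `Γ`:
`S(t,x) ≥ e^{-c̄ t} min_y S(0,y)`. -/
theorem susceptible_exponential_lower_bound
    (d : ℕ) (hd : 1 ≤ d) (n : ℕ) [NeZero n] (νS cbar T : ℝ)
    (hνS : 0 < νS) (hcbar : 0 ≤ cbar) (hT : 0 < T)
    (S : ℝ → Grid d n → ℝ) (Γ : ℝ → Grid d n → ℝ)
    (hScont : ∀ x, ContinuousOn (fun t => S t x) (Icc 0 T))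
    (hSpos : ∀ t ∈ Icc (0:ℝ) T, ∀ x, 0 ≤ S t x)
    (hΓmeas : ∀ x, Measurable fun s => Γ s x)
    (hΓ : ∀ s ∈ Icc (0:ℝ) T, ∀ x, Γ s x ∈ Icc 0 cbar)
    (heq : ∀ t ∈ Icc (0:ℝ) T, ∀ x,
      S t x = S 0 x - (∫ s in (0:ℝ)..t, S s x * Γ s x)
        + νS * ∫ s in (0:ℝ)..t, discLap d n (S s) x) :
    ∀ t ∈ Icc (0:ℝ) T, ∀ x,
      Real.exp (-cbar * t) * (⨅ y, S 0 y) ≤ S t x :=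
  susceptible_exponential_lower_bound_general d n νS cbar T hνS hcbar S Γ hScont hSpos hΓmeas hΓ heq
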